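/- Let $B$ be a commutative ring, let $c \ge 1$ and $t \ge 1$ be integers, and let $S = B[U_{i,j} : 1 \le i \le c,\ 1 \le j \le t]$ be the polynomial ring over $B$ in the $c\,t$ variables $U_{i,j}$. Given elements $b_2,\dots,b_t \in B$, define $\tilde\alpha_i := U_{i,1} + b_2 U_{i,2} + \dots + b_t U_{i,t} \in S$ for $i = 1,\dots,c$. If $g_1,\dots,g_m \in B$ is a regular sequence in $B$, then $\tilde\alpha_1,\dots,\tilde\alpha_c, g_1,\dots,g_m$ is a regular sequence in $S$. -/

import Mathlib

/-!
Split off the variables `U_{i,1}`: then `S = A[U_{1,1}, …, U_{c,1}]` with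
`A = B[U_{i,j} : j ≥ 2]`, and `α̃ᵢ = U_{i,1} + aᵢ` with `aᵢ ∈ A`. Since `A` is free, hence faithfully
flat, over `B`, the `gₖ` stay regular in `A`. The monic `U_{1,1} + a₁` is a nonzerodivisor, and
modding it out is evaluation at `U_{1,1} = -a₁`, which carries the rest of the sequence to the
same kind of sequence in one variable fewer; induct on `c`.
-/

open MvPolynomial RingTheory.Sequence
open scoped Pointwise

namespace RingTheory.Sequence

variable {R S : Type*} [CommRing R] [CommRing S]

lemma _root_.RingEquiv.isRegular_map_iff (e : R ≃+* S) {rs : List R} :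
    IsRegular S (rs.map e) ↔ IsRegular R rs :=
  (e.toAddEquiv.isRegular_congr <| List.forall₂_map_right_iff.mpr <|
    List.forall₂_same.mpr fun r _ x => map_mul e r x).symm

lemma isRegular_cons_iff_of_ringEquiv (r : R) (rs : List R) (e : (R ⧸ Ideal.span {r}) ≃+* S) :
    IsRegular R (r :: rs) ↔
      IsSMulRegular R r ∧ IsRegular S (rs.map fun a => e (Ideal.Quotient.mk _ a)) := by
  have hspan : (r • ⊤ : Submodule R R) = Ideal.span {r} := by
    rw [← Submodule.ideal_span_singleton_smul, smul_eq_mul, Ideal.mul_top]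
  rw [isRegular_cons_iff]
  refine and_congr_right fun _ => AddEquiv.isRegular_congr
    (e := (Submodule.quotEquivOfEq _ _ hspan).toAddEquiv.trans e.toAddEquiv) ?_
  refine List.forall₂_map_right_iff.mpr <| List.forall₂_same.mpr fun a _ x => ?_
  obtain ⟨y, rfl⟩ := Submodule.Quotient.mk_surjective _ x
  exact map_mul e (Ideal.Quotient.mk _ a) (Ideal.Quotient.mk _ y)

end RingTheory.Sequence

namespace Polynomial

lemma isRegular_X_sub_C_cons_map_C {R : Type*} [CommRing R] (x : R) {rs : List R}
    (h : IsRegular R rs) : IsRegular R[X] ((X - C x) :: rs.map C) := by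
  refine (isRegular_cons_iff_of_ringEquiv _ _ (quotientSpanXSubCAlgEquiv x).toRingEquiv).mpr
    ⟨(monic_X_sub_C x).isRegular.left.isSMulRegular, ?_⟩
  simpa [Function.comp_def] using h

end Polynomial

def Equiv.prodSumSubtypeSndNe {ι κ : Type*} [DecidableEq κ] (k₀ : κ) :
    ι × κ ≃ ι ⊕ {q : ι × κ // q.2 ≠ k₀} where
  toFun q := if h : q.2 = k₀ then .inl q.1 else .inr ⟨q, h⟩
  invFun := Sum.elim (fun i => (i, k₀)) Subtype.val
  left_inv := by
    rintro ⟨i, k⟩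
    by_cases h : k = k₀ <;> simp [h]
  right_inv := by
    rintro (i | ⟨q, h⟩)
    · simp
    · simp [h]

namespace MvPolynomial

variable {R : Type*} [CommRing R]

lemma isRegular_ofFn_X_add_C_append_map_C {n : ℕ} (a : Fin n → R) {rs : List R}
    (h : IsRegular R rs) :
    IsRegular (MvPolynomial (Fin n) R) (List.ofFn (fun i => X i + C (a i)) ++ rs.map C) := by
  induction n generalizing R with
  | zero =>
    have := h.nontrivial
    simpa using h.of_faithfullyFlat (S := MvPolynomial (Fin 0) R)
  | succ n ih =>
    have hC (r : R) : finSuccEquiv R n (C r) = Polynomial.C (C r) := (finSuccEquiv R n).commutes r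
    rw [← (finSuccEquiv R n).toRingEquiv.isRegular_map_iff]
    convert Polynomial.isRegular_X_sub_C_cons_map_C (-C (a 0)) (ih (Fin.tail a) h) using 1
    simp [List.ofFn_succ, finSuccEquiv_X_zero, finSuccEquiv_X_succ, hC, Fin.tail, Function.comp_def]

variable (R) {ι κ : Type*} [DecidableEq κ]

noncomputable def prodSplitAlgEquiv (k₀ : κ) :
    MvPolynomial (ι × κ) R ≃ₐ[R] MvPolynomial ι (MvPolynomial {q : ι × κ // q.2 ≠ k₀} R) :=
  (renameEquiv R (Equiv.prodSumSubtypeSndNe k₀)).trans (sumAlgEquiv R ι _)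

variable {R}

@[simp]
lemma prodSplitAlgEquiv_X_self (k₀ : κ) (i : ι) :
    prodSplitAlgEquiv R k₀ (X (i, k₀)) = X i := by
  simp [prodSplitAlgEquiv, Equiv.prodSumSubtypeSndNe]

lemma prodSplitAlgEquiv_X_of_ne {k₀ : κ} (q : ι × κ) (h : q.2 ≠ k₀) :
    prodSplitAlgEquiv R k₀ (X q) = C (X ⟨q, h⟩) := by
  simp [prodSplitAlgEquiv, Equiv.prodSumSubtypeSndNe, h]

@[simp]
lemma prodSplitAlgEquiv_C (k₀ : κ) (r : R) :
    prodSplitAlgEquiv (ι := ι) R k₀ (C r) = C (C r) :=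
  (prodSplitAlgEquiv R k₀).commutes r

end MvPolynomial

theorem generic_forms_append_regular_sequence_general
    (B : Type) [CommRing B] (c t m : ℕ) (ht : 1 ≤ t)
    (b : Fin t → B)
    (α : Fin c → MvPolynomial (Fin c × Fin t) B)
    (hα : ∀ i (h0 : 0 < t), α i = X (i, ⟨0, h0⟩) +
      ∑ j ∈ Finset.univ.erase ⟨0, h0⟩, C (b j) * X (i, j))
    (g : Fin m → B)
    (hg : RingTheory.Sequence.IsRegular B (List.ofFn g)) :
    RingTheory.Sequence.IsRegular (MvPolynomial (Fin c × Fin t) B)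
      (List.ofFn α ++ List.ofFn fun i => (C (g i) : MvPolynomial (Fin c × Fin t) B)) := by
  set j₀ : Fin t := ⟨0, ht⟩
  have hα₀ (i : Fin c) : α i = X (i, j₀) + ∑ j ∈ Finset.univ.erase j₀, C (b j) * X (i, j) :=
    hα i ht
  have := hg.nontrivial
  rw [← (prodSplitAlgEquiv B j₀).toRingEquiv.isRegular_map_iff]
  refine (congrArg _ ?_).mpr <| isRegular_ofFn_X_add_C_append_map_C
    (fun i => ∑ j : {j // j ≠ j₀}, C (b j) * X ⟨(i, j), j.2⟩)
    (hg.of_faithfullyFlat (S := MvPolynomial {q : Fin c × Fin t // q.2 ≠ j₀} B))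
  rw [List.map_append, List.map_ofFn, List.map_ofFn, List.map_map, List.map_ofFn]
  congr 1 <;> refine congrArg List.ofFn (funext fun i => ?_)
  · simp only [Function.comp_apply, AlgEquiv.coe_ringEquiv, hα₀, map_add, map_sum, map_mul,
      prodSplitAlgEquiv_X_self, prodSplitAlgEquiv_C]
    rw [Finset.sum_subtype _ (p := (· ≠ j₀)) (by simp)]
    exact congrArg _ (Finset.sum_congr rfl fun j _ => by rw [prodSplitAlgEquiv_X_of_ne _ j.2])
  · simp

/-- **Generic linear forms prepend to regular sequences.**
Let `S = B[U_{i,j}]`, `1 ≤ i ≤ c`, `1 ≤ j ≤ t`, be a polynomial ring over a commutative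
ring `B` and, given `b_2, …, b_t ∈ B`, let `α̃ᵢ = U_{i,1} + b_2 U_{i,2} + ⋯ + b_t U_{i,t}`.
If `g₁, …, g_m` is a regular sequence in `B`, then `α̃₁, …, α̃_c, g₁, …, g_m` is a
regular sequence in `S`. -/
theorem generic_forms_append_regular_sequence
    (B : Type) [CommRing B] (c t m : ℕ) (hc : 1 ≤ c) (ht : 1 ≤ t)
    (b : Fin t → B)
    (α : Fin c → MvPolynomial (Fin c × Fin t) B)
    (hα : ∀ i (h0 : 0 < t), α i = X (i, ⟨0, h0⟩) +
      ∑ j ∈ Finset.univ.erase ⟨0, h0⟩, C (b j) * X (i, j))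
    (g : Fin m → B)
    (hg : RingTheory.Sequence.IsRegular B (List.ofFn g)) :
    RingTheory.Sequence.IsRegular (MvPolynomial (Fin c × Fin t) B)
      (List.ofFn α ++ List.ofFn fun i => (C (g i) : MvPolynomial (Fin c × Fin t) B)) :=
  generic_forms_append_regular_sequence_general B c t m ht b α hα g hg
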